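/- Change of variables from output feedback to disturbance feedback: let K ∈ ℝ^{mN×pN} be such that K·G is nilpotent. Then I − K·G is invertible; setting Q := (I − K·G)^{-1}·K, the matrix Q·G is nilpotent, I + Q·G is invertible, (I + Q·G)^{-1}·Q = K, and J̃(Q) = J(K). -/

import Mathlib

open Matrix

noncomputable section

open scoped ComplexOrder in
/-- The positive semidefinite square root of a positive semidefinite matrix
(removed from Mathlib; restored with its old definition). -/
def Matrix.PosSemidef.sqrt {n 𝕜 : Type*} [Fintype n] [DecidableEq n] [RCLike 𝕜]
    {A : Matrix n n 𝕜} (hA : A.PosSemidef) : Matrix n n 𝕜 :=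
  hA.1.eigenvectorUnitary.1 * diagonal ((↑) ∘ (√·) ∘ hA.1.eigenvalues) *
  (star hA.1.eigenvectorUnitary : Matrix n n 𝕜)

/-- Squared Frobenius norm of a real matrix. -/
def frobSq {a b : Type*} [Fintype a] [Fintype b] (A : Matrix a b ℝ) : ℝ :=
  ∑ i, ∑ j, (A i j) ^ 2

/-- Squared Euclidean norm of a real vector. -/
def vecSq {a : Type*} [Fintype a] (v : a → ℝ) : ℝ :=
  ∑ i, (v i) ^ 2

/-- The finite-horizon LQG cost `J(K)` of the paper, written in terms of the
square roots `Msq = M^{1/2}`, `Swsq = Σw^{1/2}`, `Rsq = R^{1/2}`, `Svsq = Σv^{1/2}`. -/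
def Jcost {nn mm pp : ℕ}
    (P11 : Matrix (Fin nn) (Fin nn) ℝ) (P12 : Matrix (Fin nn) (Fin mm) ℝ)
    (C : Matrix (Fin pp) (Fin nn) ℝ)
    (Msq Swsq : Matrix (Fin nn) (Fin nn) ℝ)
    (Rsq : Matrix (Fin mm) (Fin mm) ℝ) (Svsq : Matrix (Fin pp) (Fin pp) ℝ)
    (μ : Fin nn → ℝ) (K : Matrix (Fin mm) (Fin pp) ℝ) : ℝ :=
  frobSq (Msq * (1 - P12 * K * C)⁻¹ * P11 * Swsq)
  + frobSq (Msq * P12 * K * (1 - C * P12 * K)⁻¹ * Svsq)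
  + frobSq (Rsq * K * (1 - C * P12 * K)⁻¹ * C * P11 * Swsq)
  + frobSq (Rsq * K * (1 - C * P12 * K)⁻¹ * Svsq)
  + vecSq ((Msq * (1 - P12 * K * C)⁻¹ * P11).mulVec μ)
  + vecSq ((Rsq * K * (1 - C * P12 * K)⁻¹ * C * P11).mulVec μ)

/-- The disturbance-feedback cost `J̃(Q)` of the paper, written in terms of the
square roots `Msq = M^{1/2}`, `Swsq = Σw^{1/2}`, `Rsq = R^{1/2}`, `Svsq = Σv^{1/2}`. -/
def Jtilde {nn mm pp : ℕ}
    (P11 : Matrix (Fin nn) (Fin nn) ℝ) (P12 : Matrix (Fin nn) (Fin mm) ℝ)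
    (C : Matrix (Fin pp) (Fin nn) ℝ)
    (Msq Swsq : Matrix (Fin nn) (Fin nn) ℝ)
    (Rsq : Matrix (Fin mm) (Fin mm) ℝ) (Svsq : Matrix (Fin pp) (Fin pp) ℝ)
    (μ : Fin nn → ℝ) (Q : Matrix (Fin mm) (Fin pp) ℝ) : ℝ :=
  frobSq (Msq * (1 + P12 * Q * C) * P11 * Swsq)
  + frobSq (Msq * P12 * Q * Svsq)
  + frobSq (Rsq * Q * C * P11 * Swsq)
  + frobSq (Rsq * Q * Svsq)
  + vecSq ((Rsq * Q * C * P11).mulVec μ)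
  + vecSq ((Msq * (1 + P12 * Q * C) * P11).mulVec μ)

end

/-
Write `G = C P₁₂`. Since `K G` is nilpotent, `1 - K G` is invertible, and by Sylvester's
determinant identity so are `1 - G K` and `1 - P₁₂ K C`. The push-through identity
`K (1 - G K)⁻¹ = (1 - K G)⁻¹ K = Q` and the Woodbury-type identity
`(1 - P₁₂ K C)⁻¹ = 1 + P₁₂ (1 - K C P₁₂)⁻¹ K C = 1 + P₁₂ Q C` turn every term of `J(K)` into the
corresponding term of `J̃(Q)`. Finally `1 + Q G = (1 - K G)⁻¹`, which gives the inverse change of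
variables.
-/

namespace Matrix

variable {m n α : Type*} [Fintype m] [Fintype n] [DecidableEq m] [DecidableEq n]
  [CommRing α]

theorem mul_inv_one_sub_mul_comm (A : Matrix m n α) (B : Matrix n m α)
    (h : IsUnit (1 - A * B).det) : A * (1 - B * A)⁻¹ = (1 - A * B)⁻¹ * A := by
  have h' : IsUnit (1 - B * A).det := det_one_sub_mul_comm A B ▸ h
  have hswap : (1 - A * B) * A = A * (1 - B * A) := by
    rw [Matrix.sub_mul, Matrix.mul_sub, Matrix.one_mul, Matrix.mul_one, Matrix.mul_assoc]
  calc A * (1 - B * A)⁻¹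
      = (1 - A * B)⁻¹ * ((1 - A * B) * A) * (1 - B * A)⁻¹ := by
        rw [← Matrix.mul_assoc, nonsing_inv_mul _ h, Matrix.one_mul]
    _ = (1 - A * B)⁻¹ * A := by
        rw [hswap, Matrix.mul_assoc, Matrix.mul_assoc, mul_nonsing_inv _ h', Matrix.mul_one]

theorem inv_one_sub_mul_eq_one_add (A : Matrix m n α) (B : Matrix n m α)
    (h : IsUnit (1 - B * A).det) : (1 - A * B)⁻¹ = 1 + A * (1 - B * A)⁻¹ * B := by
  refine inv_eq_right_inv ?_
  have hBA : (1 - B * A) * ((1 - B * A)⁻¹ * B) = B := by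
    rw [← Matrix.mul_assoc, mul_nonsing_inv _ h, Matrix.one_mul]
  calc (1 - A * B) * (1 + A * (1 - B * A)⁻¹ * B)
      = 1 - A * B + A * ((1 - B * A) * ((1 - B * A)⁻¹ * B)) := by
        simp only [Matrix.mul_add, Matrix.sub_mul, Matrix.mul_sub, Matrix.one_mul, Matrix.mul_one,
          Matrix.mul_assoc]
    _ = 1 := by rw [hBA]; abel

theorem one_add_inv_one_sub_mul (X : Matrix n n α) (h : IsUnit (1 - X).det) :
    1 + (1 - X)⁻¹ * X = (1 - X)⁻¹ := by
  have hinv := nonsing_inv_mul _ h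
  rw [Matrix.mul_sub, Matrix.mul_one] at hinv
  exact (sub_eq_iff_eq_add.mp hinv).symm

theorem isNilpotent_inv_one_sub_mul {X : Matrix n n α} (hX : IsNilpotent X) :
    IsNilpotent ((1 - X)⁻¹ * X) := by
  obtain ⟨u, hu⟩ := hX.isUnit_one_sub
  have hcomm : Commute X ↑u⁻¹ :=
    Commute.units_inv_right (hu ▸ (Commute.one_right X).sub_right (Commute.refl X))
  rw [← hu, ← coe_units_inv]
  exact hcomm.symm.isNilpotent_mul_left hX

end Matrix

theorem output_to_disturbance_feedback_general {n m p N : ℕ}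
    (P11 : Matrix (Fin (n * (N + 1))) (Fin (n * (N + 1))) ℝ)
    (P12 : Matrix (Fin (n * (N + 1))) (Fin (m * N)) ℝ)
    (C : Matrix (Fin (p * N)) (Fin (n * (N + 1))) ℝ)
    {M W : Matrix (Fin (n * (N + 1))) (Fin (n * (N + 1))) ℝ}
    {R : Matrix (Fin (m * N)) (Fin (m * N)) ℝ}
    {V : Matrix (Fin (p * N)) (Fin (p * N)) ℝ}
    (hM : M.PosSemidef) (hW : W.PosSemidef) (hR : R.PosDef) (hV : V.PosDef)
    (μ : Fin (n * (N + 1)) → ℝ)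
    (G : Matrix (Fin (p * N)) (Fin (m * N)) ℝ) (hG : G = C * P12)
    (K : Matrix (Fin (m * N)) (Fin (p * N)) ℝ)
    (hK : IsNilpotent (K * G))
    (Q : Matrix (Fin (m * N)) (Fin (p * N)) ℝ) (hQ : Q = (1 - K * G)⁻¹ * K) :
    IsUnit (1 - K * G) ∧
    IsNilpotent (Q * G) ∧
    IsUnit (1 + Q * G) ∧
    (1 + Q * G)⁻¹ * Q = K ∧
    Jtilde P11 P12 C hM.sqrt hW.sqrt hR.posSemidef.sqrt hV.posSemidef.sqrt μ Q
      = Jcost P11 P12 C hM.sqrt hW.sqrt hR.posSemidef.sqrt hV.posSemidef.sqrt μ K := by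
  have hKG : IsUnit (1 - K * G) := hK.isUnit_one_sub
  have hdet : IsUnit (1 - K * G).det := (isUnit_iff_isUnit_det _).mp hKG
  have hQG : Q * G = (1 - K * G)⁻¹ * (K * G) := by rw [hQ, Matrix.mul_assoc]
  have hQG_nil : IsNilpotent (Q * G) := hQG ▸ isNilpotent_inv_one_sub_mul hK
  have hK_closed : K * (1 - C * P12 * K)⁻¹ = Q := by
    rw [← hG, mul_inv_one_sub_mul_comm K G hdet, hQ]
  have hP_closed : (1 - P12 * K * C)⁻¹ = 1 + P12 * Q * C := by
    have hKCP : K * C * P12 = K * G := by rw [hG, Matrix.mul_assoc]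
    rw [Matrix.mul_assoc P12, inv_one_sub_mul_eq_one_add _ _ (hKCP ▸ hdet), hKCP, hQ]
    simp only [Matrix.mul_assoc]
  refine ⟨hKG, hQG_nil, hQG_nil.isUnit_one_add, ?_, ?_⟩
  · rw [hQG, one_add_inv_one_sub_mul _ hdet, nonsing_inv_nonsing_inv _ hdet, hQ,
      ← Matrix.mul_assoc, mul_nonsing_inv _ hdet, Matrix.one_mul]
  · simp only [Jtilde, Jcost, hP_closed]
    simp only [Matrix.mul_assoc _ K, hK_closed]
    ring

/-- Change of variables from output feedback to disturbance feedback: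
if `K·G` is nilpotent (`G = C·P12`), then `I − K·G` is invertible; setting
`Q := (I − K·G)⁻¹·K`, the matrix `Q·G` is nilpotent, `I + Q·G` is invertible,
`(I + Q·G)⁻¹·Q = K`, and `J̃(Q) = J(K)`. -/
theorem output_to_disturbance_feedback {n m p N : ℕ}
    (hn : 0 < n) (hm : 0 < m) (hp : 0 < p) (hN : 0 < N)
    (P11 : Matrix (Fin (n * (N + 1))) (Fin (n * (N + 1))) ℝ)
    (P12 : Matrix (Fin (n * (N + 1))) (Fin (m * N)) ℝ)
    (C : Matrix (Fin (p * N)) (Fin (n * (N + 1))) ℝ)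
    {M W : Matrix (Fin (n * (N + 1))) (Fin (n * (N + 1))) ℝ}
    {R : Matrix (Fin (m * N)) (Fin (m * N)) ℝ}
    {V : Matrix (Fin (p * N)) (Fin (p * N)) ℝ}
    (hM : M.PosSemidef) (hW : W.PosSemidef) (hR : R.PosDef) (hV : V.PosDef)
    (μ : Fin (n * (N + 1)) → ℝ)
    (G : Matrix (Fin (p * N)) (Fin (m * N)) ℝ) (hG : G = C * P12)
    (K : Matrix (Fin (m * N)) (Fin (p * N)) ℝ)
    (hK : IsNilpotent (K * G))
    (Q : Matrix (Fin (m * N)) (Fin (p * N)) ℝ) (hQ : Q = (1 - K * G)⁻¹ * K) :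
    IsUnit (1 - K * G) ∧
    IsNilpotent (Q * G) ∧
    IsUnit (1 + Q * G) ∧
    (1 + Q * G)⁻¹ * Q = K ∧
    Jtilde P11 P12 C hM.sqrt hW.sqrt hR.posSemidef.sqrt hV.posSemidef.sqrt μ Q
      = Jcost P11 P12 C hM.sqrt hW.sqrt hR.posSemidef.sqrt hV.posSemidef.sqrt μ K :=
  output_to_disturbance_feedback_general P11 P12 C hM hW hR hV μ G hG K hK Q hQ
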